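/- Let $T>0$, $\nu \ge 1$, $\lambda \ge 0$, and let $f:[0,T)\to[0,\infty)$ be differentiable with $f(0)=a \ge 0$ and satisfying $f'(t) \le \nu + (\lambda - 2/(T-t))f(t)$ for all $t\in[0,T)$. Then $f(t) \le \left(a\cdot\frac{T-t}{T} + \nu t\right)\cdot\frac{T-t}{T}\cdot e^{\lambda t}$ for all $t\in[0,T)$. -/

import Mathlib

open Set Real

theorem stmt3 (T ν lam a : ℝ) (hT : 0 < T) (hν : 1 ≤ ν) (hlam : 0 ≤ lam) (ha : 0 ≤ a)
    (f f' : ℝ → ℝ) (hf0 : f 0 = a)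
    (hpos : ∀ t ∈ Set.Ico (0:ℝ) T, 0 ≤ f t)
    (hderiv : ∀ t ∈ Set.Ico (0:ℝ) T, HasDerivAt f (f' t) t)
    (hineq : ∀ t ∈ Set.Ico (0:ℝ) T, f' t ≤ ν + (lam - 2 / (T - t)) * f t) :
    ∀ t ∈ Set.Ico (0:ℝ) T,
      f t ≤ (a * ((T - t) / T) + ν * t) * ((T - t) / T) * Real.exp (lam * t) := by
  set φ : ℝ → ℝ := fun u => f u * Real.exp (-lam * u) * ((T - u) ^ 2)⁻¹ - ν * u / (T * (T - u))
    with hφdef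
  have hD : ∀ s ∈ Set.Ico (0:ℝ) T, ∃ d, HasDerivAt φ d s ∧ d ≤ 0 := by
    intro s hs
    obtain ⟨hs0, hsT⟩ := hs
    have hP : 0 < T - s := by linarith
    have hEd : HasDerivAt (fun u => Real.exp (-lam * u)) (Real.exp (-lam * s) * (-lam * 1)) s :=
      ((hasDerivAt_id s).const_mul (-lam)).exp
    have hbase : HasDerivAt (fun u => T - u) (0 - 1) s :=
      (hasDerivAt_const s T).sub (hasDerivAt_id s)
    have hsq : HasDerivAt (fun u => (T - u) ^ 2) (↑2 * (T - s) ^ 1 * (0 - 1)) s := hbase.pow 2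
    have hQ : HasDerivAt (fun u => ((T - u) ^ 2)⁻¹)
        (-(↑2 * (T - s) ^ 1 * (0 - 1)) / ((T - s) ^ 2) ^ 2) s :=
      hsq.inv (by positivity)
    have hnum : HasDerivAt (fun u => ν * u) (ν * 1) s := (hasDerivAt_id s).const_mul ν
    have hden : HasDerivAt (fun u => T * (T - u)) (T * (0 - 1)) s := hbase.const_mul T
    have hN : HasDerivAt (fun u => ν * u / (T * (T - u)))
        ((ν * 1 * (T * (T - s)) - ν * s * (T * (0 - 1))) / (T * (T - s)) ^ 2) s :=
      hnum.div hden (by positivity)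
    have hF : HasDerivAt (fun u => f u * Real.exp (-lam * u) * ((T - u) ^ 2)⁻¹)
        ((f' s * Real.exp (-lam * s) + f s * (Real.exp (-lam * s) * (-lam * 1))) * ((T - s) ^ 2)⁻¹
          + f s * Real.exp (-lam * s) * (-(↑2 * (T - s) ^ 1 * (0 - 1)) / ((T - s) ^ 2) ^ 2)) s :=
      ((hderiv s ⟨hs0, hsT⟩).mul hEd).mul hQ
    refine ⟨_, hF.sub hN, ?_⟩
    have hE1 : Real.exp (-lam * s) ≤ 1 := by
      rw [Real.exp_le_one_iff]; nlinarith
    have hE0 : (0:ℝ) < Real.exp (-lam * s) := Real.exp_pos _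
    have hkey : (f' s - lam * f s) * (T - s) + 2 * f s ≤ ν * (T - s) := by
      have h1 := hineq s ⟨hs0, hsT⟩
      have h2 : 2 / (T - s) * f s * (T - s) = 2 * f s := by field_simp
      nlinarith [mul_le_mul_of_nonneg_right h1 hP.le]
    have hexpr : (f' s * Real.exp (-lam * s) + f s * (Real.exp (-lam * s) * (-lam * 1))) * ((T - s) ^ 2)⁻¹
          + f s * Real.exp (-lam * s) * (-(↑2 * (T - s) ^ 1 * (0 - 1)) / ((T - s) ^ 2) ^ 2)
          - (ν * 1 * (T * (T - s)) - ν * s * (T * (0 - 1))) / (T * (T - s)) ^ 2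
        = ((f' s - lam * f s) * Real.exp (-lam * s) * (T - s) + 2 * f s * Real.exp (-lam * s)
            - ν * (T - s)) / (T - s) ^ 3 := by
      field_simp
      ring
    rw [hexpr]
    apply div_nonpos_of_nonpos_of_nonneg _ (by positivity)
    nlinarith [mul_le_mul_of_nonneg_right hkey hE0.le,
      mul_le_mul_of_nonneg_left hE1 (mul_nonneg (le_trans (by norm_num) hν) hP.le)]
  intro t ht
  obtain ⟨ht0, htT⟩ := ht
  have hsub : Set.Icc (0:ℝ) t ⊆ Set.Ico (0:ℝ) T := fun s hs => ⟨hs.1, lt_of_le_of_lt hs.2 htT⟩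
  have hanti : AntitoneOn φ (Set.Icc 0 t) := by
    apply antitoneOn_of_deriv_nonpos (convex_Icc _ _)
    · intro s hs
      obtain ⟨d, hd, _⟩ := hD s (hsub hs)
      exact hd.continuousAt.continuousWithinAt
    · intro s hs
      rw [interior_Icc] at hs
      obtain ⟨d, hd, _⟩ := hD s (hsub (Set.Ioo_subset_Icc_self hs))
      exact hd.differentiableAt.differentiableWithinAt
    · intro s hs
      rw [interior_Icc] at hs
      obtain ⟨d, hd, hd0⟩ := hD s (hsub (Set.Ioo_subset_Icc_self hs))
      rw [hd.deriv]; exact hd0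
  have hφt : φ t ≤ φ 0 :=
    hanti (Set.left_mem_Icc.mpr ht0) (Set.right_mem_Icc.mpr ht0) ht0
  have hφ0 : φ 0 = a * (T ^ 2)⁻¹ := by
    simp [hφdef, hf0]
  have hPt : 0 < T - t := by linarith
  have hEt : Real.exp (-lam * t) * Real.exp (lam * t) = 1 := by
    rw [← Real.exp_add]; ring_nf; exact Real.exp_zero
  have hmain : f t * Real.exp (-lam * t) * ((T - t) ^ 2)⁻¹
      ≤ a * (T ^ 2)⁻¹ + ν * t / (T * (T - t)) := by
    have := hφt
    rw [hφ0] at this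
    simp only [hφdef] at this
    linarith
  have hmul := mul_le_mul_of_nonneg_right hmain
    (by positivity : (0:ℝ) ≤ (T - t) ^ 2 * Real.exp (lam * t))
  have hlhs : f t * Real.exp (-lam * t) * ((T - t) ^ 2)⁻¹ * ((T - t) ^ 2 * Real.exp (lam * t))
      = f t := by
    have h1 : Real.exp (-lam * t) = (Real.exp (lam * t))⁻¹ := by
      rw [← Real.exp_neg]; ring_nf
    rw [h1]; field_simp
  have hrhs : (a * (T ^ 2)⁻¹ + ν * t / (T * (T - t))) * ((T - t) ^ 2 * Real.exp (lam * t))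
      = (a * ((T - t) / T) + ν * t) * ((T - t) / T) * Real.exp (lam * t) := by
    field_simp
  rw [hlhs, hrhs] at hmul
  exact hmul
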